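/- arXiv:2011.10071 — 13 statements merged into one kernel-verified Lean document; each statement's English description precedes it below -/
import Mathlib

section
/- For every subset I ⊆ K, one has I ~ I_M if and only if I_c = ∅. -/
variable {K : Type*}

/-- The equivalence relation `I ~ J` between subsets of `K`:
for every `i ∈ I` there is `j ∈ J` with `r i j`, and
for every `j ∈ J` there is `i ∈ I` with `r j i`. -/
def SetEquiv (r : K → K → Prop) (I J : Set K) : Prop :=
  (∀ i ∈ I, ∃ j ∈ J, r i j) ∧ (∀ j ∈ J, ∃ i ∈ I, r j i)

/-- A subset `I ⊆ K` is primitive if for all distinct `i, j ∈ I`,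
neither `r i j` nor `r j i` holds. -/
def Primitive (r : K → K → Prop) (I : Set K) : Prop :=
  ∀ i ∈ I, ∀ j ∈ I, i ≠ j → ¬ r i j ∧ ¬ r j i

/-- `I_M`: the set of maximal elements of `I`. -/
def partM (r : K → K → Prop) (I : Set K) : Set K :=
  {i | i ∈ I ∧ ∀ j ∈ I, j ≠ i → ¬ r i j}

/-- `I_d`: elements of `I` lying `r`-below a maximal element of `I`. -/
def partD (r : K → K → Prop) (I : Set K) : Set K :=
  {i | i ∈ I ∧ ∃ j ∈ partM r I, r i j}

/-- `I_c := I \ I_d`. -/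
def partC (r : K → K → Prop) (I : Set K) : Set K :=
  I \ partD r I

/-- `I⁺ := {i ∈ K : ∃ j ∈ I, r i j}`. -/
def plusSet (r : K → K → Prop) (I : Set K) : Set K :=
  {i | ∃ j ∈ I, r i j}

/-- The set of representatives of pure ascending chains. -/
def chainReps (r : K → K → Prop) : Set (Set K) :=
  {I | ∃ J : Set K, J = partC r J ∧ plusSet r J = I}

/-- `~` as a setoid on the power set of `K`. -/
def setEquivSetoid (r : K → K → Prop) (hrefl : ∀ i, r i i)
    (htrans : ∀ i j k, r i j → r j k → r i k) : Setoid (Set K) where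
  r := SetEquiv r
  iseqv := by
    constructor
    · intro I
      exact ⟨fun i hi => ⟨i, hi, hrefl i⟩, fun i hi => ⟨i, hi, hrefl i⟩⟩
    · intro I J h
      exact ⟨h.2, h.1⟩
    · intro I J L h1 h2
      constructor
      · intro i hi
        obtain ⟨j, hj, hij⟩ := h1.1 i hi
        obtain ⟨l, hl, hjl⟩ := h2.1 j hj
        exact ⟨l, hl, htrans i j l hij hjl⟩
      · intro l hl
        obtain ⟨j, hj, hlj⟩ := h2.2 l hl
        obtain ⟨i, hi, hji⟩ := h1.2 j hj
        exact ⟨i, hi, htrans l j i hlj hji⟩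

theorem equiv_partM_iff_partC_empty (r : K → K → Prop)
    (hrefl : ∀ i, r i i) (htrans : ∀ i j k, r i j → r j k → r i k)
    (I : Set K) :
    SetEquiv r I (partM r I) ↔ partC r I = ∅ := by
  constructor
  · rintro ⟨h1, _⟩
    ext i
    simp only [Set.mem_empty_iff_false, iff_false]
    rintro ⟨hi, hnd⟩
    exact hnd ⟨hi, h1 i hi⟩
  · intro hc
    constructor
    · intro i hi
      have : i ∈ partD r I := by
        by_contra hnd
        have : i ∈ partC r I := ⟨hi, hnd⟩
        rw [hc] at this
        exact this
      exact this.2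
    · intro j hj
      exact ⟨j, hj.1, hrefl j⟩
end

section
/- For all subsets I, J ⊆ K, one has I_M ~ J_M if and only if I_d ~ J_d. -/
variable {K : Type*}

theorem partM_equiv_iff_partD_equiv (r : K → K → Prop)
    (hrefl : ∀ i, r i i) (htrans : ∀ i j k, r i j → r j k → r i k)
    (I J : Set K) :
    SetEquiv r (partM r I) (partM r J) ↔ SetEquiv r (partD r I) (partD r J) := by
  have hMD : ∀ S : Set K, partM r S ⊆ partD r S := fun S i hi =>
    ⟨hi.1, i, hi, hrefl i⟩
  constructor
  · rintro ⟨h1, h2⟩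
    constructor
    · rintro i ⟨hiI, m, hm, him⟩
      obtain ⟨j, hj, hmj⟩ := h1 m hm
      exact ⟨j, hMD J hj, htrans _ _ _ him hmj⟩
    · rintro j ⟨hjJ, m, hm, hjm⟩
      obtain ⟨i, hi, hmi⟩ := h2 m hm
      exact ⟨i, hMD I hi, htrans _ _ _ hjm hmi⟩
  · rintro ⟨h1, h2⟩
    constructor
    · intro i hi
      obtain ⟨j, hjd, hij⟩ := h1 i (hMD I hi)
      obtain ⟨_, m, hm, hjm⟩ := hjd
      exact ⟨m, hm, htrans _ _ _ hij hjm⟩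
    · intro j hj
      obtain ⟨i, hid, hji⟩ := h2 j (hMD J hj)
      obtain ⟨_, m, hm, him⟩ := hid
      exact ⟨m, hm, htrans _ _ _ hji him⟩
end

section
/- Assume condition (C3), i.e., r is antisymmetric. For all subsets I, J ⊆ K, one has I_M = J_M if and only if I_d ~ J_d. -/
variable {K : Type*}

lemma partM_subset_partD (r : K → K → Prop) (hrefl : ∀ i, r i i) (I : Set K) :
    partM r I ⊆ partD r I := fun i hi => ⟨hi.1, i, hi, hrefl i⟩

lemma partM_subset (r : K → K → Prop) (I : Set K) : partM r I ⊆ I := fun _ hi => hi.1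

lemma key (r : K → K → Prop)
    (hrefl : ∀ i, r i i) (htrans : ∀ i j k, r i j → r j k → r i k)
    (hanti : ∀ i j, r i j → r j i → i = j)
    (I J : Set K) (h : SetEquiv r (partD r I) (partD r J)) :
    partM r I ⊆ partM r J := by
  intro i hi
  obtain ⟨j, hj, hij⟩ := h.1 i (partM_subset_partD r hrefl I hi)
  obtain ⟨m, hm, hjm⟩ := hj.2
  have him : r i m := htrans _ _ _ hij hjm
  obtain ⟨i', hi', hmi'⟩ := h.2 m (partM_subset_partD r hrefl J hm)
  obtain ⟨m', hm', hi'm'⟩ := hi'.2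
  have him' : r i m' := htrans _ _ _ him (htrans _ _ _ hmi' hi'm')
  have : m' = i := by
    by_contra hne
    exact hi.2 m' hm'.1 hne him'
  have hmi : r m i := this ▸ htrans _ _ _ hmi' hi'm'
  have : i = m := hanti _ _ him hmi
  exact this ▸ hm

theorem partM_eq_iff_partD_equiv (r : K → K → Prop)
    (hrefl : ∀ i, r i i) (htrans : ∀ i j k, r i j → r j k → r i k)
    (hanti : ∀ i j, r i j → r j i → i = j)
    (I J : Set K) :
    partM r I = partM r J ↔ SetEquiv r (partD r I) (partD r J) := by
  constructor
  · intro h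
    constructor
    · intro i hi
      obtain ⟨hiI, m, hm, him⟩ := hi
      exact ⟨m, partM_subset_partD r hrefl J (h ▸ hm), him⟩
    · intro j hj
      obtain ⟨hjJ, m, hm, hjm⟩ := hj
      exact ⟨m, partM_subset_partD r hrefl I (h ▸ hm), hjm⟩
  · intro h
    exact Set.Subset.antisymm (key r hrefl htrans hanti I J h)
      (key r hrefl htrans hanti J I ⟨h.2, h.1⟩)
end

section
/- Assume condition (C3), i.e., r is antisymmetric. For all subsets I, J ⊆ K, one has I ~ J if and only if I_M = J_M and I_c ~ J_c. -/
variable {K : Type*}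

lemma aux_partM_subset (r : K → K → Prop)
    (htrans : ∀ i j k, r i j → r j k → r i k)
    (hanti : ∀ i j, r i j → r j i → i = j)
    {I J : Set K} (h : SetEquiv r I J) : partM r I ⊆ partM r J := by
  rintro i ⟨hiI, hmax⟩
  obtain ⟨j, hjJ, hij⟩ := h.1 i hiI
  obtain ⟨i', hi'I, hji'⟩ := h.2 j hjJ
  have hii' : i' = i := by
    by_contra hne
    exact hmax i' hi'I hne (htrans _ _ _ hij hji')
  rw [hii'] at hji'
  have hij' : i = j := hanti _ _ hij hji'
  refine ⟨hij' ▸ hjJ, ?_⟩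
  intro j' hj'J hne hrij'
  obtain ⟨i'', hi''I, hj'i''⟩ := h.2 j' hj'J
  have : i'' = i := by
    by_contra hne'
    exact hmax i'' hi''I hne' (htrans _ _ _ hrij' hj'i'')
  rw [this] at hj'i''
  exact hne (hanti _ _ hj'i'' hrij')

lemma aux_partC (r : K → K → Prop)
    (htrans : ∀ i j k, r i j → r j k → r i k)
    {I J : Set K} (h : SetEquiv r I J) (hM : partM r I = partM r J) :
    ∀ i ∈ partC r I, ∃ j ∈ partC r J, r i j := by
  rintro i ⟨hiI, hiNd⟩
  obtain ⟨j, hjJ, hij⟩ := h.1 i hiI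
  refine ⟨j, ⟨hjJ, ?_⟩, hij⟩
  rintro ⟨-, m, hmM, hjm⟩
  exact hiNd ⟨hiI, m, hM ▸ hmM, htrans _ _ _ hij hjm⟩

theorem equiv_iff_partM_eq_and_partC_equiv (r : K → K → Prop)
    (hrefl : ∀ i, r i i) (htrans : ∀ i j k, r i j → r j k → r i k)
    (hanti : ∀ i j, r i j → r j i → i = j)
    (I J : Set K) :
    SetEquiv r I J ↔ partM r I = partM r J ∧ SetEquiv r (partC r I) (partC r J) := by
  constructor
  · intro h
    have h' : SetEquiv r J I := ⟨h.2, h.1⟩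
    have hM : partM r I = partM r J :=
      Set.Subset.antisymm (aux_partM_subset r htrans hanti h)
        (aux_partM_subset r htrans hanti h')
    exact ⟨hM, aux_partC r htrans h hM, aux_partC r htrans h' hM.symm⟩
  · rintro ⟨hM, hc1, hc2⟩
    constructor
    · intro i hiI
      by_cases hd : i ∈ partD r I
      · obtain ⟨-, m, hmM, him⟩ := hd
        exact ⟨m, (hM ▸ hmM : m ∈ partM r J).1, him⟩
      · obtain ⟨j, hjc, hij⟩ := hc1 i ⟨hiI, hd⟩
        exact ⟨j, hjc.1, hij⟩
    · intro j hjJ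
      by_cases hd : j ∈ partD r J
      · obtain ⟨-, m, hmM, hjm⟩ := hd
        exact ⟨m, (hM ▸ hmM : m ∈ partM r I).1, hjm⟩
      · obtain ⟨i, hic, hji⟩ := hc2 j ⟨hjJ, hd⟩
        exact ⟨i, hic.1, hji⟩
end

section
/- Assume condition (C3), i.e., r is antisymmetric. For every subset I ⊆ K, there exists a primitive subset J ⊆ K with I ~ J if and only if I_c = ∅. -/
variable {K : Type*}

theorem equiv_primitive_iff_partC_empty (r : K → K → Prop)
    (hrefl : ∀ i, r i i) (htrans : ∀ i j k, r i j → r j k → r i k)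
    (hanti : ∀ i j, r i j → r j i → i = j)
    (I : Set K) :
    (∃ J : Set K, Primitive r J ∧ SetEquiv r I J) ↔ partC r I = ∅ := by
  constructor
  · rintro ⟨J, hprim, heq⟩
    ext i
    simp only [Set.mem_empty_iff_false, iff_false]
    rintro ⟨hiI, hic⟩
    apply hic
    obtain ⟨j, hjJ, hij⟩ := heq.1 i hiI
    obtain ⟨i', hi'I, hji'⟩ := heq.2 j hjJ
    obtain ⟨j', hj'J, hi'j'⟩ := heq.1 i' hi'I
    have hjj' : j = j' := by
      by_contra hne
      exact (hprim j hjJ j' hj'J hne).1 (htrans j i' j' hji' hi'j')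
    subst hjj'
    have hji : i' = j := hanti i' j hi'j' hji'
    subst hji
    refine ⟨hiI, i', ⟨hi'I, ?_⟩, hij⟩
    intro k hkI hki hrik
    obtain ⟨j'', hj''J, hkj''⟩ := heq.1 k hkI
    have : i' = j'' := by
      by_contra hne
      exact (hprim i' hjJ j'' hj''J hne).1 (htrans i' k j'' hrik hkj'')
    subst this
    exact hki (hanti k i' hkj'' hrik)
  · intro hc
    refine ⟨partM r I, ?_, ?_, ?_⟩
    · intro i hi j hj hne
      exact ⟨hi.2 j hj.1 (Ne.symm hne), hj.2 i hi.1 hne⟩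
    · intro i hiI
      have : i ∉ partC r I := by rw [hc]; exact Set.notMem_empty i
      have hid : i ∈ partD r I := by
        by_contra h; exact this ⟨hiI, h⟩
      obtain ⟨_, j, hjM, hij⟩ := hid
      exact ⟨j, hjM, hij⟩
    · intro j hj
      exact ⟨j, hj.1, hrefl j⟩
end

section
/- Assume condition (C3), i.e., r is antisymmetric. If I ⊆ K and I_c ≠ ∅, then I_c is infinite; more precisely, for every i ∈ I_c there exists a sequence (i_n)_{n ∈ ℕ} of pairwise distinct elements of I_c with i_0 = i and r i_n i_{n+1} for all n. -/
variable {K : Type*}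

theorem partC_infinite_of_nonempty (r : K → K → Prop)
    (hrefl : ∀ i, r i i) (htrans : ∀ i j k, r i j → r j k → r i k)
    (hanti : ∀ i j, r i j → r j i → i = j)
    (I : Set K) (hne : partC r I ≠ ∅) :
    (partC r I).Infinite ∧
    ∀ i ∈ partC r I, ∃ f : ℕ → K, Function.Injective f ∧ f 0 = i ∧
      (∀ n, f n ∈ partC r I) ∧ ∀ n, r (f n) (f (n + 1)) := by
  
  -- step lemma
  have step : ∀ i ∈ partC r I, ∃ j ∈ partC r I, j ≠ i ∧ r i j := by
    intro i hi
    obtain ⟨hiI, hiD⟩ := hi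
    have hiM : i ∉ partM r I := fun h => hiD ⟨hiI, i, h, hrefl i⟩
    have : ¬ ∀ j ∈ I, j ≠ i → ¬ r i j := fun h => hiM ⟨hiI, h⟩
    push_neg at this
    obtain ⟨j, hjI, hji, hrij⟩ := this
    refine ⟨j, ⟨hjI, fun hjD => ?_⟩, hji, hrij⟩
    obtain ⟨_, m, hm, hjm⟩ := hjD
    exact hiD ⟨hiI, m, hm, htrans i j m hrij hjm⟩
  have main : ∀ i ∈ partC r I, ∃ f : ℕ → K, Function.Injective f ∧ f 0 = i ∧
      (∀ n, f n ∈ partC r I) ∧ ∀ n, r (f n) (f (n + 1)) := by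
    intro i hi
    choose g hg hgne hgr using step
    let F : {x // x ∈ partC r I} → {x // x ∈ partC r I} :=
      fun x => ⟨g x.1 x.2, hg x.1 x.2⟩
    let f : ℕ → K := fun n => ((F^[n]) ⟨i, hi⟩).1
    have hmem : ∀ n, f n ∈ partC r I := fun n => ((F^[n]) ⟨i, hi⟩).2
    have hstep : ∀ n, r (f n) (f (n + 1)) ∧ f n ≠ f (n + 1) := by
      intro n
      have : (F^[n + 1]) ⟨i, hi⟩ = F ((F^[n]) ⟨i, hi⟩) := Function.iterate_succ_apply' F n _
      constructor
      · show r ((F^[n]) ⟨i, hi⟩).1 ((F^[n+1]) ⟨i, hi⟩).1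
        rw [this]
        exact hgr _ _
      · show ((F^[n]) ⟨i, hi⟩).1 ≠ ((F^[n+1]) ⟨i, hi⟩).1
        rw [this]
        exact fun h => hgne _ ((F^[n]) ⟨i, hi⟩).2 h.symm
    have hlt : ∀ m n, m < n → r (f m) (f n) ∧ f m ≠ f n := by
      intro m n hmn
      induction n with
      | zero => omega
      | succ k ih =>
        rcases Nat.lt_succ_iff_lt_or_eq.mp hmn with h | h
        · obtain ⟨h1, h2⟩ := ih h
          obtain ⟨h3, h4⟩ := hstep k
          refine ⟨htrans _ _ _ h1 h3, fun he => ?_⟩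
          exact h2 (hanti _ _ h1 (he ▸ h3))
        · subst h; exact hstep m
    refine ⟨f, ?_, rfl, hmem, fun n => (hstep n).1⟩
    intro m n hmn
    by_contra hne'
    rcases lt_or_gt_of_ne hne' with h | h
    · exact (hlt m n h).2 hmn
    · exact (hlt n m h).2 hmn.symm
  refine ⟨?_, main⟩
  obtain ⟨i, hi⟩ := Set.nonempty_iff_ne_empty.mpr hne
  obtain ⟨f, hinj, -, hmem, -⟩ := main i hi
  exact Set.infinite_of_injective_forall_mem hinj hmem
end

section
/- Assume condition (C3), i.e., r is antisymmetric. If I ⊆ K is primitive, then for every subset J ⊆ K one has J ~ I if and only if I ⊆ J and for every j ∈ J there exists i ∈ I with r j i. (In other words, the ~-equivalence class of a primitive subset I is { J ⊆ K : J ⊇ I and every element of J lies r-below some element of I }.) -/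
variable {K : Type*}

theorem equivClass_of_primitive (r : K → K → Prop)
    (hrefl : ∀ i, r i i) (htrans : ∀ i j k, r i j → r j k → r i k)
    (hanti : ∀ i j, r i j → r j i → i = j)
    (I : Set K) (hI : Primitive r I) :
    ∀ J : Set K, SetEquiv r J I ↔ I ⊆ J ∧ ∀ j ∈ J, ∃ i ∈ I, r j i := by
  intro J
  constructor
  · rintro ⟨hJI, hIJ⟩
    constructor
    · intro i hi
      obtain ⟨j, hj, hij⟩ := hIJ i hi
      obtain ⟨i', hi', hji'⟩ := hJI j hj
      have hii' : r i i' := htrans i j i' hij hji'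
      have : i = i' := by
        by_contra hne
        exact (hI i hi i' hi' hne).1 hii'
      subst this
      have := hanti i j hij hji'
      rwa [this]
    · exact hJI
  · rintro ⟨hsub, h⟩
    exact ⟨h, fun i hi => ⟨i, hsub hi, hrefl i⟩⟩
end

section
/- Assume condition (C3), i.e., r is antisymmetric. A subset J ⊆ K belongs to C (the set of representatives of pure ascending chains) if and only if J = J_c and J = J^+. -/
variable {K : Type*}

theorem mem_chainReps_iff (r : K → K → Prop)
    (hrefl : ∀ i, r i i) (htrans : ∀ i j k, r i j → r j k → r i k)
    (hanti : ∀ i j, r i j → r j i → i = j)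
    (J : Set K) :
    J ∈ chainReps r ↔ J = partC r J ∧ J = plusSet r J := by
  constructor
  · rintro ⟨I, hIc, hIp⟩
    -- I ⊆ plusSet r I = J
    have hsub : I ⊆ J := by
      intro k hk
      rw [← hIp]
      exact ⟨k, hk, hrefl k⟩
    -- key: no maximal elements in J
    have hM : partM r J = ∅ := by
      ext m
      simp only [Set.mem_empty_iff_false, iff_false]
      rintro ⟨hmJ, hmax⟩
      obtain ⟨k, hkI, hmk⟩ : ∃ k ∈ I, r m k := by rw [← hIp] at hmJ; exact hmJ
      by_cases hkm : k = m
      · subst hkm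
        -- k ∈ I, k maximal in J, hence maximal in I, hence k ∈ partD r I
        have hkM : k ∈ partM r I := ⟨hkI, fun j hj hjk => hmax j (hsub hj) hjk⟩
        have hkd : k ∈ partD r I := ⟨hkI, k, hkM, hrefl k⟩
        have := hIc ▸ hkI
        exact this.2 hkd
      · exact hmax k (hsub hkI) hkm hmk
    have hD : partD r J = ∅ := by
      ext i
      simp only [Set.mem_empty_iff_false, iff_false]
      rintro ⟨-, j, hjM, -⟩
      rw [hM] at hjM
      exact hjM
    constructor
    · rw [partC, hD, Set.diff_empty]
    · ext i
      constructor
      · intro hi; exact ⟨i, hi, hrefl i⟩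
      · rintro ⟨j, hj, hij⟩
        rw [← hIp] at hj ⊢
        obtain ⟨k, hkI, hjk⟩ := hj
        exact ⟨k, hkI, htrans i j k hij hjk⟩
  · rintro ⟨h1, h2⟩
    exact ⟨J, h1, h2.symm⟩
end

section
/- Assume condition (C3), i.e., r is antisymmetric. The map g sending a subset I ⊆ K to the pair (I_M, (I_c)^+) satisfies: (a) g(I) ∈ 𝔍 for every I ⊆ K; (b) for all I, J ⊆ K, g(I) = g(J) if and only if I ~ J; and (c) for every pair (P₀, C₀) ∈ 𝔍 there exists I ⊆ K with g(I) = (P₀, C₀). Hence g induces a bijection between the set of ~-equivalence classes of subsets of K and 𝔍. -/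
variable {K : Type*}

/-- The family 𝔍 of admissible pairs (primitive subset, representative of a
pure ascending chain). -/
def Jfam (r : K → K → Prop) : Set (Set K × Set K) :=
  {p | Primitive r p.1 ∧ p.2 ∈ chainReps r ∧ p.1 ∩ p.2 = ∅ ∧
    plusSet r (p.2 \ plusSet r p.1) = p.2}

section Aux

variable {r : K → K → Prop}

lemma ascend (hrefl : ∀ i, r i i) (htrans : ∀ i j k, r i j → r j k → r i k)
    {I : Set K} {i : K} (hi : i ∈ partC r I) :
    ∃ j ∈ partC r I, j ≠ i ∧ r i j := by
  obtain ⟨hiI, hid⟩ := hi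
  have hnm : i ∉ partM r I := fun hm => hid ⟨hiI, i, hm, hrefl i⟩
  have : ¬ (i ∈ I ∧ ∀ j ∈ I, j ≠ i → ¬ r i j) := hnm
  push_neg at this
  obtain ⟨j, hjI, hji, hrij⟩ := this hiI
  refine ⟨j, ⟨hjI, fun hjd => ?_⟩, hji, hrij⟩
  obtain ⟨_, m, hm, hrjm⟩ := hjd
  exact hid ⟨hiI, m, hm, htrans _ _ _ hrij hrjm⟩

lemma partM_partC (hrefl : ∀ i, r i i) (htrans : ∀ i j k, r i j → r j k → r i k)
    (I : Set K) : partM r (partC r I) = ∅ := by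
  ext i
  simp only [Set.mem_empty_iff_false, iff_false]
  rintro ⟨hi, hmax⟩
  obtain ⟨j, hj, hji, hrij⟩ := ascend hrefl htrans hi
  exact hmax j hj hji hrij

lemma partC_eq_self (hrefl : ∀ i, r i i) (htrans : ∀ i j k, r i j → r j k → r i k)
    (I : Set K) : partC r (partC r I) = partC r I := by
  have h := partM_partC hrefl htrans (r := r) I
  ext i
  constructor
  · exact fun hi => hi.1
  · intro hi
    refine ⟨hi, fun hd => ?_⟩
    obtain ⟨_, m, hm, _⟩ := hd
    rw [h] at hm
    exact absurd hm (Set.notMem_empty m)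

lemma half_equiv (hrefl : ∀ i, r i i) {I J : Set K}
    (hM : partM r I = partM r J)
    (hC : plusSet r (partC r I) = plusSet r (partC r J)) :
    ∀ i ∈ I, ∃ j ∈ J, r i j := by
  intro i hiI
  by_cases hd : i ∈ partD r I
  · obtain ⟨_, m, hm, hrim⟩ := hd
    rw [hM] at hm
    exact ⟨m, hm.1, hrim⟩
  · have hic : i ∈ partC r I := ⟨hiI, hd⟩
    have : i ∈ plusSet r (partC r I) := ⟨i, hic, hrefl i⟩
    rw [hC] at this
    obtain ⟨j, hj, hrij⟩ := this
    exact ⟨j, hj.1, hrij⟩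

lemma partM_subset_s12 (htrans : ∀ i j k, r i j → r j k → r i k)
    (hanti : ∀ i j, r i j → r j i → i = j)
    {I J : Set K} (h : SetEquiv r I J) : partM r I ⊆ partM r J := by
  rintro m ⟨hmI, hmax⟩
  obtain ⟨j, hjJ, hmj⟩ := h.1 m hmI
  obtain ⟨i, hiI, hji⟩ := h.2 j hjJ
  have hmi : r m i := htrans _ _ _ hmj hji
  have him : i = m := by
    by_contra hne
    exact hmax i hiI hne hmi
  subst him
  have hjm : j = i := (hanti i j hmj hji).symm
  subst hjm
  refine ⟨hjJ, fun j' hj'J hne hrmj' => ?_⟩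
  obtain ⟨i', hi'I, hj'i'⟩ := h.2 j' hj'J
  have hmi' : r j i' := htrans _ _ _ hrmj' hj'i'
  have : i' = j := by
    by_contra hne'
    exact hmax i' hi'I hne' hmi'
  subst this
  exact hne (hanti j' i' hj'i' hrmj')

lemma partC_plus_subset (hrefl : ∀ i, r i i) (htrans : ∀ i j k, r i j → r j k → r i k)
    {I J : Set K} (h : SetEquiv r I J) (hM : partM r I = partM r J) :
    plusSet r (partC r I) ⊆ plusSet r (partC r J) := by
  rintro x ⟨i, ⟨hiI, hid⟩, hrxi⟩
  obtain ⟨j, hjJ, hrij⟩ := h.1 i hiI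
  refine ⟨j, ⟨hjJ, fun hjd => ?_⟩, htrans _ _ _ hrxi hrij⟩
  obtain ⟨_, m, hm, hrjm⟩ := hjd
  rw [← hM] at hm
  exact hid ⟨hiI, m, hm, htrans _ _ _ hrij hrjm⟩

end Aux

theorem gMap_bijection (r : K → K → Prop)
    (hrefl : ∀ i, r i i) (htrans : ∀ i j k, r i j → r j k → r i k)
    (hanti : ∀ i j, r i j → r j i → i = j) :
    (∀ I : Set K, (partM r I, plusSet r (partC r I)) ∈ Jfam r) ∧
    (∀ I J : Set K,
      (partM r I, plusSet r (partC r I)) = (partM r J, plusSet r (partC r J)) ↔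
        SetEquiv r I J) ∧
    (∀ p ∈ Jfam r, ∃ I : Set K, (partM r I, plusSet r (partC r I)) = p) := by
  refine ⟨?_, ?_, ?_⟩
  · -- (a)
    intro I
    refine ⟨?_, ⟨partC r I, (partC_eq_self hrefl htrans I).symm, rfl⟩, ?_, ?_⟩
    · -- primitive
      rintro i ⟨hiI, hiMax⟩ j ⟨hjI, hjMax⟩ hne
      exact ⟨hiMax j hjI (Ne.symm hne), hjMax i hiI hne⟩
    · -- disjoint
      ext x
      simp only [Set.mem_inter_iff, Set.mem_empty_iff_false, iff_false, not_and]
      rintro ⟨hxI, hxMax⟩ ⟨j, hjc, hrxj⟩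
      by_cases hji : j = x
      · subst hji
        exact hjc.2 ⟨hxI, j, ⟨hxI, hxMax⟩, hrefl j⟩
      · exact hxMax j hjc.1 hji hrxj
    · -- (C⁺ \ M⁺)⁺ = C⁺
      ext x
      constructor
      · rintro ⟨y, ⟨⟨z, hzc, hryz⟩, _⟩, hrxy⟩
        exact ⟨z, hzc, htrans _ _ _ hrxy hryz⟩
      · rintro ⟨j, hjc, hrxj⟩
        refine ⟨j, ⟨⟨j, hjc, hrefl j⟩, fun hjm => ?_⟩, hrxj⟩
        obtain ⟨m, hm, hrjm⟩ := hjm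
        exact hjc.2 ⟨hjc.1, m, hm, hrjm⟩
  · -- (b)
    intro I J
    constructor
    · intro h
      have hM : partM r I = partM r J := congrArg Prod.fst h
      have hC : plusSet r (partC r I) = plusSet r (partC r J) := congrArg Prod.snd h
      exact ⟨half_equiv hrefl hM hC, half_equiv hrefl hM.symm hC.symm⟩
    · intro h
      have hM : partM r I = partM r J :=
        Set.Subset.antisymm (partM_subset_s12 htrans hanti h)
          (partM_subset_s12 htrans hanti ⟨h.2, h.1⟩)
      have hC : plusSet r (partC r I) = plusSet r (partC r J) :=
        Set.Subset.antisymm (partC_plus_subset hrefl htrans h hM)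
          (partC_plus_subset hrefl htrans ⟨h.2, h.1⟩ hM.symm)
      rw [hM, hC]
  · -- (c)
    rintro ⟨P₀, C₀⟩ ⟨hP, ⟨J, hJc, hJplus⟩, hdisj, hplus⟩
    dsimp only at hP hJplus hdisj hplus
    set D : Set K := C₀ \ plusSet r P₀ with hD
    refine ⟨P₀ ∪ D, ?_⟩
    have hMI : partM r (P₀ ∪ D) = P₀ := by
      ext i
      constructor
      · rintro ⟨hiI, hiMax⟩
        by_contra hiP
        have hiD : i ∈ D := hiI.resolve_left hiP
        have hiC : i ∈ plusSet r J := by rw [hJplus]; exact hiD.1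
        obtain ⟨j, hjJ, hrij⟩ := hiC
        have hjc : j ∈ partC r J := by rw [← hJc]; exact hjJ
        obtain ⟨j', hj'c, hj'j, hrjj'⟩ := ascend hrefl htrans hjc
        have hj'J : j' ∈ J := by rw [hJc]; exact hj'c
        have hrij' : r i j' := htrans _ _ _ hrij hrjj'
        have hj'C : j' ∈ C₀ := by rw [← hJplus]; exact ⟨j', hj'J, hrefl j'⟩
        have hj'P : j' ∉ plusSet r P₀ := by
          rintro ⟨q, hq, hrj'q⟩
          exact hiD.2 ⟨q, hq, htrans _ _ _ hrij' hrj'q⟩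
        have hj'i : j' ≠ i := by
          intro hji
          subst hji
          exact hj'j (hanti j' j hrij hrjj')
        exact hiMax j' (Or.inr ⟨hj'C, hj'P⟩) hj'i hrij'
      · intro hp
        refine ⟨Or.inl hp, fun j hj hne hrpj => ?_⟩
        rcases hj with hjP | hjD
        · exact (hP i hp j hjP (Ne.symm hne)).1 hrpj
        · have : i ∈ P₀ ∩ C₀ := ⟨hp, by rw [← hplus]; exact ⟨j, hjD, hrpj⟩⟩
          rw [hdisj] at this
          exact this
    have hCI : partC r (P₀ ∪ D) = D := by
      ext i
      constructor
      · rintro ⟨hiI, hid⟩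
        rcases hiI with hiP | hiD
        · exact absurd ⟨Or.inl hiP, i, by rw [hMI]; exact hiP, hrefl i⟩ hid
        · exact hiD
      · intro hiD
        refine ⟨Or.inr hiD, ?_⟩
        rintro ⟨_, m, hm, hrim⟩
        rw [hMI] at hm
        exact hiD.2 ⟨m, hm, hrim⟩
    rw [hMI, hCI, hplus]
end

section
/- Assume condition (C3), i.e., r is antisymmetric, and assume there is no ascending chain in K (no sequence of pairwise distinct elements (i_n)_{n ∈ ℕ} with r i_n i_{n+1} for all n). Then for every subset I ⊆ K there exists a unique primitive subset J ⊆ K with I ~ J; in other words, the map sending a primitive subset to its ~-equivalence class is a bijection onto the set of all ~-equivalence classes of subsets of K. -/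
variable {K : Type*}

theorem existsUnique_primitive_of_no_ascending_chain (r : K → K → Prop)
    (hrefl : ∀ i, r i i) (htrans : ∀ i j k, r i j → r j k → r i k)
    (hanti : ∀ i j, r i j → r j i → i = j)
    (hchain : ¬ ∃ f : ℕ → K, Function.Injective f ∧ ∀ n, r (f n) (f (n + 1))) :
    ∀ I : Set K, ∃! J : Set K, Primitive r J ∧ SetEquiv r I J := by
  intro I
  -- every element of I lies below a maximal element of I
  have hmax : ∀ i ∈ I, ∃ j ∈ partM r I, r i j := by
    by_contra h
    push_neg at h
    obtain ⟨i0, hi0, hbad⟩ := h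
    set S : Set K := {i | i ∈ I ∧ ∀ j ∈ partM r I, ¬ r i j} with hS
    have hi0S : i0 ∈ S := ⟨hi0, fun j hj hr' => hbad j hj hr'⟩
    have hstep : ∀ i ∈ S, ∃ j ∈ S, i ≠ j ∧ r i j := by
      intro i hi
      have hnotmax : i ∉ partM r I := fun hm => hi.2 i hm (hrefl i)
      have hex : ∃ j ∈ I, j ≠ i ∧ r i j := by
        by_contra hc
        push_neg at hc
        exact hnotmax ⟨hi.1, fun j hj hne => hc j hj hne⟩
      obtain ⟨j, hjI, hne, hij⟩ := hex
      exact ⟨j, ⟨hjI, fun k hk hjk => hi.2 k hk (htrans i j k hij hjk)⟩,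
        hne.symm, hij⟩
    choose next hnextS hnextne hnextr using hstep
    let f : ℕ → {x // x ∈ S} := fun n =>
      Nat.rec ⟨i0, hi0S⟩ (fun _ p => ⟨next p.1 p.2, hnextS p.1 p.2⟩) n
    have hr : ∀ n, r (f n).1 (f (n+1)).1 := fun n => hnextr _ _
    have hne : ∀ n, (f n).1 ≠ (f (n+1)).1 := fun n => hnextne _ _
    have hlt : ∀ n m, n < m → r (f n).1 (f m).1 := by
      intro n m h
      induction m with
      | zero => omega
      | succ m ih =>
        rcases Nat.lt_succ_iff_lt_or_eq.mp h with h' | h'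
        · exact htrans _ _ _ (ih h') (hr m)
        · subst h'; exact hr n
    have key : ∀ n m, n < m → (f n).1 ≠ (f m).1 := by
      intro n m h heq
      rcases Nat.lt_or_ge (n+1) m with h' | h'
      · have h2 : r (f (n+1)).1 (f n).1 := heq ▸ hlt (n+1) m h'
        exact hne n (hanti _ _ (hr n) h2)
      · have : m = n + 1 := by omega
        exact hne n (this ▸ heq)
    apply hchain
    refine ⟨fun n => (f n).1, ?_, hr⟩
    intro n m hnm
    by_contra hne'
    rcases Nat.lt_or_ge n m with h | h
    · exact key n m h hnm
    · exact key m n (by omega) hnm.symm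
  have equivM : SetEquiv r I (partM r I) :=
    ⟨hmax, fun j hj => ⟨j, hj.1, hrefl j⟩⟩
  have primM : Primitive r (partM r I) := by
    intro i hi j hj hij
    exact ⟨hi.2 j hj.1 (Ne.symm hij), hj.2 i hi.1 hij⟩
  -- uniqueness of primitive representatives
  have hsub : ∀ J₁ J₂ : Set K, Primitive r J₁ → Primitive r J₂ →
      SetEquiv r J₁ J₂ → J₁ ⊆ J₂ := by
    intro J₁ J₂ h1 h2 heq j hj
    obtain ⟨k, hk, hjk⟩ := heq.1 j hj
    obtain ⟨j', hj', hkj'⟩ := heq.2 k hk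
    have hjj' : r j j' := htrans _ _ _ hjk hkj'
    have hje : j = j' := by
      by_contra hnejj
      exact (h1 j hj j' hj' hnejj).1 hjj'
    subst hje
    have : j = k := hanti j k hjk hkj'
    subst this
    exact hk
  have symm : ∀ {A B : Set K}, SetEquiv r A B → SetEquiv r B A :=
    fun h => ⟨h.2, h.1⟩
  have trans : ∀ {A B C : Set K}, SetEquiv r A B → SetEquiv r B C →
      SetEquiv r A C := fun {A B C} h1 h2 =>
    (setEquivSetoid r hrefl htrans).iseqv.trans h1 h2
  refine ⟨partM r I, ⟨primM, equivM⟩, ?_⟩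
  intro J ⟨hJp, hJe⟩
  have hJM : SetEquiv r J (partM r I) := trans (symm hJe) equivM
  exact Set.Subset.antisymm (hsub J (partM r I) hJp primM hJM)
    (hsub (partM r I) J primM hJp (symm hJM))
end

section
/- Assume condition (C3), i.e., r is antisymmetric. Suppose K is countably infinite and every primitive subset of K is finite. Then there exists an injective sequence (i_n)_{n ∈ ℕ} in K such that either r i_n i_{n+1} for all n, or r i_{n+1} i_n for all n. -/
variable {K : Type*}

theorem exists_monotone_injective_seq (r : K → K → Prop)
    (hrefl : ∀ i, r i i) (htrans : ∀ i j k, r i j → r j k → r i k)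
    (hanti : ∀ i j, r i j → r j i → i = j)
    [Countable K] [Infinite K]
    (hfin : ∀ I : Set K, Primitive r I → I.Finite) :
    ∃ f : ℕ → K, Function.Injective f ∧
      ((∀ n, r (f n) (f (n + 1))) ∨ (∀ n, r (f (n + 1)) (f n))) := by
  haveI : IsTrans K r := ⟨htrans⟩
  haveI : IsTrans K (Function.swap r) := ⟨fun a b c h1 h2 => htrans c b a h2 h1⟩
  obtain ⟨e⟩ : Nonempty (ℕ ≃ K) := nonempty_equiv_of_countable
  obtain ⟨g, hg | hg⟩ := exists_increasing_or_nonincreasing_subseq r e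
  · exact ⟨e ∘ g, e.injective.comp g.injective, Or.inl fun n => hg n (n + 1) (by omega)⟩
  obtain ⟨h, hh | hh⟩ := exists_increasing_or_nonincreasing_subseq (Function.swap r) (e ∘ g)
  · exact ⟨e ∘ g ∘ h, e.injective.comp (g.injective.comp h.injective),
      Or.inr fun n => hh n (n + 1) (by omega)⟩
  · exfalso
    set F : ℕ → K := e ∘ g ∘ h with hF
    have hFinj : Function.Injective F := e.injective.comp (g.injective.comp h.injective)
    have hprim : Primitive r (Set.range F) := by
      rintro _ ⟨m, rfl⟩ _ ⟨n, rfl⟩ hne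
      have hmn : m ≠ n := fun hq => hne (by rw [hq])
      rcases lt_or_gt_of_ne hmn with hlt | hlt
      · exact ⟨fun hr => hg (h m) (h n) (h.strictMono hlt) hr, fun hr => hh m n hlt hr⟩
      · exact ⟨fun hr => hh n m hlt hr, fun hr => hg (h n) (h m) (h.strictMono hlt) hr⟩
    have : (Set.range F).Infinite := Set.infinite_range_of_injective hFinj
    exact this (hfin _ hprim)
end

section
/- Assume condition (C3), i.e., r is antisymmetric. Then the quotient of the power set of K by the equivalence relation ~ is finite if and only if K is finite. -/
variable {K : Type*}

theorem quotient_finite_iff (r : K → K → Prop)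
    (hrefl : ∀ i, r i i) (htrans : ∀ i j k, r i j → r j k → r i k)
    (hanti : ∀ i j, r i j → r j i → i = j) :
    Finite (Quotient (setEquivSetoid r hrefl htrans)) ↔ Finite K := by
  constructor
  · intro h
    have hinj : Function.Injective
        (fun k : K => Quotient.mk (setEquivSetoid r hrefl htrans) {k}) := by
      intro i j hij
      have h' : SetEquiv r {i} {j} := Quotient.exact hij
      obtain ⟨j', hj', hrij⟩ := h'.1 i rfl
      obtain ⟨i', hi', hrji⟩ := h'.2 j rfl
      rw [Set.mem_singleton_iff] at hj' hi'
      exact hanti i j (hj' ▸ hrij) (hi' ▸ hrji)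
    exact Finite.of_injective _ hinj
  · intro h
    exact Quotient.finite _
end

section
/- Assume condition (C3), i.e., r is antisymmetric. Let P be the set of primitive subsets of K and let C be the set of representatives of pure ascending chains. Then the quotient of the power set of K by ~ is countably infinite if and only if P and C are both countable and at least one of them is countably infinite; and this quotient is uncountable if and only if P is uncountable or C is uncountable. -/
variable {K : Type*}

/-!
Under antisymmetry the class of `I` is determined by the pair `(I_M, (I_c)⁺)`: both components
are invariants of `~`, the first is primitive, the second lies in `C`, and
`I ~ I_M ∪ (I_c)⁺`. Conversely, equivalent primitive sets coincide, and so do equivalent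
members of `C`, since these are down-closed. Hence `P` and `C` inject into the quotient, which
injects into `P × C`, and the cardinality statements follow.
-/

section CardinalityOfInjections

variable {Q P C : Type*} {f : Q → P × C} {g : P → Q} {h : C → Q}

lemma countable_iff_of_injective (hf : f.Injective) (hg : g.Injective) (hh : h.Injective) :
    Countable Q ↔ Countable P ∧ Countable C :=
  ⟨fun _ => ⟨hg.countable, hh.countable⟩, fun ⟨_, _⟩ => hf.countable⟩

lemma infinite_iff_of_injective (hf : f.Injective) (hg : g.Injective) (hh : h.Injective) :
    Infinite Q ↔ Infinite P ∨ Infinite C := by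
  refine ⟨fun hQ => ?_, fun hPC => hPC.elim (fun _ => .of_injective g hg)
    (fun _ => .of_injective h hh)⟩
  by_contra! hfin
  obtain ⟨_, _⟩ := hfin
  exact not_finite_iff_infinite.2 hQ (Finite.of_injective f hf)

end CardinalityOfInjections

namespace SetEquiv

variable {r : K → K → Prop} {I J L : Set K}

lemma symm (h : SetEquiv r I J) : SetEquiv r J I := ⟨h.2, h.1⟩

lemma trans [IsTrans K r] (h₁ : SetEquiv r I J) (h₂ : SetEquiv r J L) : SetEquiv r I L := by
  constructor
  · intro i hi
    obtain ⟨j, hj, hij⟩ := h₁.1 i hi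
    obtain ⟨l, hl, hjl⟩ := h₂.1 j hj
    exact ⟨l, hl, trans_of r hij hjl⟩
  · intro l hl
    obtain ⟨j, hj, hlj⟩ := h₂.2 l hl
    obtain ⟨i, hi, hji⟩ := h₁.2 j hj
    exact ⟨i, hi, trans_of r hlj hji⟩

end SetEquiv

section Invariants

variable {r : K → K → Prop} {I J : Set K}

lemma primitive_partM (I : Set K) : Primitive r (partM r I) :=
  fun _ hi _ hj hne => ⟨hi.2 _ hj.1 hne.symm, hj.2 _ hi.1 hne⟩

lemma eq_of_mem_partM {i i' : K} (hi : i ∈ partM r I) (hi' : i' ∈ I) (h : r i i') : i' = i := by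
  by_contra hne
  exact hi.2 i' hi' hne h

variable [IsTrans K r] [Std.Antisymm r]

lemma partM_subset_partM_of_setEquiv (h : SetEquiv r I J) : partM r I ⊆ partM r J := by
  intro i hi
  obtain ⟨j, hjJ, hij⟩ := h.1 i hi.1
  obtain ⟨i', hi'I, hji'⟩ := h.2 j hjJ
  have hji : j = i := antisymm_of r (eq_of_mem_partM hi hi'I (trans_of r hij hji') ▸ hji') hij
  refine ⟨hji ▸ hjJ, fun j' hj'J hne hij' => hne ?_⟩
  obtain ⟨i'', hi''I, hj'i''⟩ := h.2 j' hj'J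
  exact antisymm_of r (eq_of_mem_partM hi hi''I (trans_of r hij' hj'i'') ▸ hj'i'') hij'

lemma partM_eq_of_setEquiv (h : SetEquiv r I J) : partM r I = partM r J :=
  (partM_subset_partM_of_setEquiv h).antisymm (partM_subset_partM_of_setEquiv h.symm)

lemma exists_mem_partC_of_setEquiv (h : SetEquiv r I J) {i : K} (hi : i ∈ partC r I) :
    ∃ j ∈ partC r J, r i j := by
  obtain ⟨j, hjJ, hij⟩ := h.1 i hi.1
  refine ⟨j, ⟨hjJ, fun ⟨_, m, hm, hjm⟩ => hi.2 ⟨hi.1, m, ?_, trans_of r hij hjm⟩⟩, hij⟩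
  rwa [partM_eq_of_setEquiv h]

lemma plusSet_partC_subset_of_setEquiv (h : SetEquiv r I J) :
    plusSet r (partC r I) ⊆ plusSet r (partC r J) := by
  rintro i ⟨k, hk, hik⟩
  obtain ⟨j, hj, hkj⟩ := exists_mem_partC_of_setEquiv h hk
  exact ⟨j, hj, trans_of r hik hkj⟩

lemma plusSet_partC_eq_of_setEquiv (h : SetEquiv r I J) :
    plusSet r (partC r I) = plusSet r (partC r J) :=
  (plusSet_partC_subset_of_setEquiv h).antisymm (plusSet_partC_subset_of_setEquiv h.symm)

end Invariants

section Representatives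

variable {r : K → K → Prop} {I J : Set K}

lemma setEquiv_partM_union_plusSet_partC [Std.Refl r] (I : Set K) :
    SetEquiv r I (partM r I ∪ plusSet r (partC r I)) := by
  constructor
  · intro i hiI
    by_cases hd : i ∈ partD r I
    · obtain ⟨m, hm, him⟩ := hd.2
      exact ⟨m, .inl hm, him⟩
    · exact ⟨i, .inr ⟨i, ⟨hiI, hd⟩, refl_of r i⟩, refl_of r i⟩
  · rintro j (hj | ⟨k, hk, hjk⟩)
    · exact ⟨j, hj.1, refl_of r j⟩
    · exact ⟨k, hk.1, hjk⟩

/-- A non-maximal element of `I_c` lies strictly below some element of `I`, which is then again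
in `I_c`; so `I_c` has no maximal elements. -/
lemma partM_partC_eq_empty [Std.Refl r] [IsTrans K r] (I : Set K) :
    partM r (partC r I) = ∅ := by
  refine Set.eq_empty_of_forall_notMem fun i ⟨⟨hiI, hid⟩, hmax⟩ => ?_
  have hiM : i ∉ partM r I := fun hM => hid ⟨hiI, i, hM, refl_of r i⟩
  obtain ⟨j, hjI, hne, hij⟩ : ∃ j ∈ I, j ≠ i ∧ r i j := by
    by_contra! hc
    exact hiM ⟨hiI, hc⟩
  exact hmax j ⟨hjI, fun ⟨_, m, hm, hjm⟩ => hid ⟨hiI, m, hm, trans_of r hij hjm⟩⟩ hne hij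

lemma partC_partC [Std.Refl r] [IsTrans K r] (I : Set K) :
    partC r (partC r I) = partC r I := by
  have : partD r (partC r I) = ∅ := by
    simp [partD, partM_partC_eq_empty]
  rw [partC, this, Set.sdiff_empty]

lemma plusSet_partC_mem_chainReps [Std.Refl r] [IsTrans K r] (I : Set K) :
    plusSet r (partC r I) ∈ chainReps r :=
  ⟨partC r I, (partC_partC I).symm, rfl⟩

lemma plusSet_plusSet [Std.Refl r] [IsTrans K r] (I : Set K) :
    plusSet r (plusSet r I) = plusSet r I := by
  refine subset_antisymm ?_ fun i hi => ⟨i, hi, refl_of r i⟩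
  rintro i ⟨j, ⟨k, hk, hjk⟩, hij⟩
  exact ⟨k, hk, trans_of r hij hjk⟩

lemma plusSet_eq_self_of_mem_chainReps [Std.Refl r] [IsTrans K r] (hI : I ∈ chainReps r) :
    plusSet r I = I := by
  obtain ⟨J, -, rfl⟩ := hI
  exact plusSet_plusSet J

lemma eq_of_setEquiv_of_plusSet_eq_self (hI : plusSet r I = I) (hJ : plusSet r J = J)
    (h : SetEquiv r I J) : I = J := by
  apply subset_antisymm
  · intro i hi
    rw [← hJ]
    exact h.1 i hi
  · intro j hj
    rw [← hI]
    exact h.2 j hj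

lemma subset_of_setEquiv_of_primitive [IsTrans K r] [Std.Antisymm r] (hI : Primitive r I)
    (h : SetEquiv r I J) : I ⊆ J := by
  intro i hi
  obtain ⟨j, hj, hij⟩ := h.1 i hi
  obtain ⟨i', hi', hji'⟩ := h.2 j hj
  obtain rfl : i = i' := by
    by_contra hne
    exact (hI i hi i' hi' hne).1 (trans_of r hij hji')
  rwa [antisymm_of r hij hji']

lemma eq_of_setEquiv_of_primitive [IsTrans K r] [Std.Antisymm r] (hI : Primitive r I)
    (hJ : Primitive r J) (h : SetEquiv r I J) : I = J :=
  (subset_of_setEquiv_of_primitive hI h).antisymm (subset_of_setEquiv_of_primitive hJ h.symm)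

end Representatives

section CanonicalPair

variable (r : K → K → Prop) [Std.Refl r] [IsTrans K r]

def canonicalPair (I : Set K) : {J : Set K | Primitive r J} × chainReps r :=
  (⟨partM r I, primitive_partM I⟩, ⟨plusSet r (partC r I), plusSet_partC_mem_chainReps I⟩)

variable {r} [Std.Antisymm r]

lemma canonicalPair_eq_iff {I J : Set K} :
    canonicalPair r I = canonicalPair r J ↔ SetEquiv r I J := by
  refine ⟨fun h => ?_, fun h => ?_⟩
  · simp only [canonicalPair, Prod.mk.injEq, Subtype.mk.injEq] at h
    have hJ := setEquiv_partM_union_plusSet_partC (r := r) J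
    rw [← h.1, ← h.2] at hJ
    exact (setEquiv_partM_union_plusSet_partC I).trans hJ.symm
  · simp only [canonicalPair, partM_eq_of_setEquiv h, plusSet_partC_eq_of_setEquiv h]

end CanonicalPair

theorem quotient_cardinality (r : K → K → Prop)
    (hrefl : ∀ i, r i i) (htrans : ∀ i j k, r i j → r j k → r i k)
    (hanti : ∀ i j, r i j → r j i → i = j) :
    ((Countable (Quotient (setEquivSetoid r hrefl htrans)) ∧
        Infinite (Quotient (setEquivSetoid r hrefl htrans))) ↔
      ({I : Set K | Primitive r I}.Countable ∧ (chainReps r).Countable ∧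
        ({I : Set K | Primitive r I}.Infinite ∨ (chainReps r).Infinite))) ∧
    (¬ Countable (Quotient (setEquivSetoid r hrefl htrans)) ↔
      (¬ {I : Set K | Primitive r I}.Countable ∨ ¬ (chainReps r).Countable)) := by
  have : Std.Refl r := ⟨hrefl⟩
  have : IsTrans K r := ⟨htrans⟩
  have : Std.Antisymm r := ⟨hanti⟩
  let S := setEquivSetoid r hrefl htrans
  let toPair : Quotient S → {I : Set K | Primitive r I} × chainReps r :=
    Quotient.lift (canonicalPair r) fun _ _ => canonicalPair_eq_iff.2
  have hPair : toPair.Injective := fun x y =>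
    Quotient.inductionOn₂ x y fun _ _ h => Quotient.sound (canonicalPair_eq_iff.1 h)
  have hPrimitive : (fun I : {I : Set K | Primitive r I} => Quotient.mk S I.1).Injective :=
    fun I J h => Subtype.ext (eq_of_setEquiv_of_primitive I.2 J.2 (Quotient.exact h))
  have hChain : (fun I : chainReps r => Quotient.mk S I.1).Injective :=
    fun I J h => Subtype.ext (eq_of_setEquiv_of_plusSet_eq_self
      (plusSet_eq_self_of_mem_chainReps I.2) (plusSet_eq_self_of_mem_chainReps J.2)
      (Quotient.exact h))
  rw [← Set.countable_coe_iff, ← Set.countable_coe_iff, ← Set.infinite_coe_iff,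
    ← Set.infinite_coe_iff, countable_iff_of_injective hPair hPrimitive hChain,
    infinite_iff_of_injective hPair hPrimitive hChain]
  tauto
end
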